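/- Let ψ_t : 𝔻 → D_t be the normalized conformal maps (ψ_t(0)=0, ψ_t'(0)>0) onto the domains D_t bounded by the level curves {R = t²/2} of a weight R that is real-analytic near 𝕋, quadratically flat on 𝕋 (R = 0 and ∇R = 0 on 𝕋) with ΔR > 0 on 𝕋, chosen so that D_t increases with t and D_0 = 𝔻. Then the first variation of the boundary satisfies Re( ζ̄ ∂_t ψ_t(ζ) )|_{t=0} = (4ΔR(ζ))^{−1/2} for ζ ∈ 𝕋. -/

import Mathlib

/-- The (Euclidean) Laplacian on ℂ; the operator `Δ = ∂∂̄` equals `lap / 4`, so that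
`4ΔR = lap R`. -/
noncomputable def lap (Q : ℂ → ℝ) (z : ℂ) : ℝ :=
  iteratedFDeriv ℝ 2 Q z ![1, 1] + iteratedFDeriv ℝ 2 Q z ![Complex.I, Complex.I]

/-!
Near `ζ ∈ 𝕋` the weight `R` agrees with half its Hessian `B` at `ζ` up to a cubic error, so
expanding the level condition `R(ψ_t ζ) = t²/2` to second order in `t` gives `B(v, v) = 1` for the
velocity `v = ∂_t ψ_t(ζ)|_{t=0}`. Since `∇R` vanishes along `𝕋`, `B` kills the tangent direction
`iζ`, hence `B(v, v) = Re(ζ̄ v)² · lap R ζ`. The sign of `Re(ζ̄ v)` comes from monotonicity: for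
`t ≥ 0` the point `ψ_t ζ` lies outside `𝔻 ⊆ ψ_t(𝔻)`, because by the open mapping theorem an
injective holomorphic map never sends a boundary point of its domain into the image of the domain.
-/

open Asymptotics Filter Metric Set Topology
open scoped InnerProductSpace ComplexConjugate

section SecondOrder

variable {E F : Type*} [NormedAddCommGroup E] [NormedSpace ℝ E]
  [NormedAddCommGroup F] [NormedSpace ℝ F]

theorem AnalyticAt.isBigO_sub_half_fderiv_fderiv [CompleteSpace F] {f : E → F} {x : E}
    (hf : AnalyticAt ℝ f x) (h0 : f x = 0) (h1 : fderiv ℝ f x = 0) :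
    (fun y => f (x + y) - (2 : ℝ)⁻¹ • fderiv ℝ (fderiv ℝ f) x y y) =O[𝓝 0]
      fun y => ‖y‖ ^ 3 := by
  obtain ⟨p, hp⟩ := hf
  refine (hp.isBigO_sub_partialSum_pow 3).congr_left fun y => ?_
  obtain ⟨r, hpr⟩ := hp
  have hterm (n : ℕ) :
      p n (fun _ => y) = (n.factorial : ℝ)⁻¹ • iteratedFDeriv ℝ n f x (fun _ => y) := by
    rw [← hpr.factorial_smul y n, ← Nat.cast_smul_eq_nsmul ℝ, smul_smul,
      inv_mul_cancel₀ (by positivity), one_smul]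
  simp [FormalMultilinearSeries.partialSum, Finset.sum_range_succ, hterm,
    iteratedFDeriv_two_apply, h0, h1]

theorem AnalyticAt.tendsto_inv_sq_smul_comp [CompleteSpace F] {f : E → F} {x v : E} {γ : ℝ → E}
    (hf : AnalyticAt ℝ f x) (h0 : f x = 0) (h1 : fderiv ℝ f x = 0)
    (hγ : HasDerivAt γ v 0) (hγ0 : γ 0 = x) :
    Tendsto (fun t => (t ^ 2)⁻¹ • f (γ t)) (𝓝[≠] 0)
      (𝓝 ((2 : ℝ)⁻¹ • fderiv ℝ (fderiv ℝ f) x v v)) := by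
  set B := fderiv ℝ (fderiv ℝ f) x
  have hγO : (fun t => γ t - x) =O[𝓝 0] fun t => t := by
    simpa [hγ0] using hγ.isBigO_sub
  have hγx : Tendsto (fun t => γ t - x) (𝓝 0) (𝓝 0) := hγO.trans_tendsto tendsto_id
  have herr : (fun t => f (γ t) - (2 : ℝ)⁻¹ • B (γ t - x) (γ t - x)) =o[𝓝 0] fun t => t ^ 2 :=
    calc _ =O[𝓝 0] fun t => ‖γ t - x‖ ^ 3 := by
          simpa only [Function.comp_def, add_sub_cancel] using
            (hf.isBigO_sub_half_fderiv_fderiv h0 h1).comp_tendsto hγx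
      _ =O[𝓝 0] fun t => t ^ 3 := hγO.norm_left.pow 3
      _ =o[𝓝 0] fun t => t ^ 2 := isLittleO_pow_pow (by norm_num)
  have hslope : Tendsto (fun t => t⁻¹ • (γ t - x)) (𝓝[≠] 0) (𝓝 v) := by
    refine hγ.tendsto_slope.congr fun t => ?_
    rw [slope_def_module, sub_zero, hγ0]
  have hquad : Tendsto (fun t => (2 : ℝ)⁻¹ • B (t⁻¹ • (γ t - x)) (t⁻¹ • (γ t - x))) (𝓝[≠] 0)
      (𝓝 ((2 : ℝ)⁻¹ • B v v)) :=
    ((B.continuous₂.tendsto (v, v)).comp (hslope.prodMk_nhds hslope)).const_smul _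
  refine (zero_add ((2 : ℝ)⁻¹ • B v v) ▸
    (herr.tendsto_inv_smul_nhds_zero.mono_left nhdsWithin_le_nhds).add hquad).congr fun t => ?_
  simp only [map_smul, FunLike.coe_smul, Pi.smul_apply, smul_smul]
  module

theorem AnalyticAt.fderiv_fderiv_apply_eq_one_of_comp_eq_sq_div_two {f : E → ℝ} {x v : E}
    {γ : ℝ → E} (hf : AnalyticAt ℝ f x) (h0 : f x = 0) (h1 : fderiv ℝ f x = 0)
    (hγ : HasDerivAt γ v 0) (hγ0 : γ 0 = x) (hlevel : ∀ᶠ t in 𝓝 0, f (γ t) = t ^ 2 / 2) :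
    fderiv ℝ (fderiv ℝ f) x v v = 1 := by
  have hconst : ∀ᶠ t in 𝓝[≠] (0 : ℝ), (t ^ 2)⁻¹ • f (γ t) = 2⁻¹ := by
    filter_upwards [hlevel.filter_mono nhdsWithin_le_nhds, self_mem_nhdsWithin] with t ht
      (ht₀ : t ≠ 0)
    rw [ht, smul_eq_mul]
    field_simp
  have := tendsto_nhds_unique (hf.tendsto_inv_sq_smul_comp h0 h1 hγ hγ0)
    (tendsto_const_nhds.congr' (EventuallyEq.symm hconst))
  simpa using this

end SecondOrder

theorem HasFDerivAt.apply_eq_zero_of_eventually_const_comp {E G : Type*}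
    [NormedAddCommGroup E] [NormedSpace ℝ E] [NormedAddCommGroup G] [NormedSpace ℝ G]
    {g : E → G} {L : E →L[ℝ] G} {c : ℝ → E} {u : E} (hg : HasFDerivAt g L (c 0))
    (hc : HasDerivAt c u 0) (hgc : ∀ᶠ θ in 𝓝 0, g (c θ) = g (c 0)) : L u = 0 :=
  (hg.comp_hasDerivAt 0 hc).unique ((hasDerivAt_const 0 (g (c 0))).congr_of_eventuallyEq hgc)

theorem Complex.hasDerivAt_exp_ofReal_mul_I_mul (ζ : ℂ) :
    HasDerivAt (fun θ : ℝ => exp (θ * I) * ζ) (I * ζ) 0 := by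
  have := (((hasDerivAt_id (0 : ℝ)).ofReal_comp.mul_const I).cexp).mul_const ζ
  simpa using this

theorem HasFDerivAt.apply_I_mul_eq_zero_of_eqOn_sphere {G : Type*} [NormedAddCommGroup G]
    [NormedSpace ℝ G] {g : ℂ → G} {L : ℂ →L[ℝ] G} {ζ : ℂ} (hg : HasFDerivAt g L ζ)
    (hgS : ∀ z ∈ sphere (0 : ℂ) 1, g z = 0) (hζ : ζ ∈ sphere (0 : ℂ) 1) :
    L (Complex.I * ζ) = 0 := by
  have hS (θ : ℝ) : Complex.exp (θ * Complex.I) * ζ ∈ sphere (0 : ℂ) 1 := by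
    simpa [Complex.norm_exp_ofReal_mul_I] using hζ
  refine HasFDerivAt.apply_eq_zero_of_eventually_const_comp (g := g) (by simpa using hg)
    (Complex.hasDerivAt_exp_ofReal_mul_I_mul ζ) (Eventually.of_forall fun θ => ?_)
  rw [hgS _ (hS θ), hgS _ (hS 0)]

namespace ContinuousLinearMap

open Complex

variable {F : Type*} [NormedAddCommGroup F] [NormedSpace ℝ F] {B : ℂ →L[ℝ] ℂ →L[ℝ] F}
  {ζ : ℂ}

theorem apply_self_eq_of_apply_I_mul_eq_zero (hB : ∀ x y, B x y = B y x) (hζ : ‖ζ‖ = 1)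
    (htan : B (I * ζ) = 0) (v : ℂ) : B v v = (conj ζ * v).re ^ 2 • B ζ ζ := by
  set a := (conj ζ * v).re
  set b := (conj ζ * v).im
  have hv : v = a • ζ + b • (I * ζ) := by
    have hζζ : ζ * conj ζ = 1 := by rw [mul_conj, normSq_eq_norm_sq, hζ]; simp
    calc v = ζ * (conj ζ * v) := by rw [← mul_assoc, hζζ, one_mul]
      _ = _ := by
        conv_lhs => rw [← re_add_im (conj ζ * v)]
        simp only [real_smul]
        ring
  have hcross : B ζ (I * ζ) = 0 := by rw [hB, htan, zero_apply]
  rw [hv]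
  simp only [map_add, map_smul, smul_apply, htan, hcross, smul_zero, add_zero, smul_smul]
  congr 1
  ring

theorem apply_one_one_add_apply_I_I (hB : ∀ x y, B x y = B y x) (hζ : ‖ζ‖ = 1)
    (htan : B (I * ζ) = 0) : B 1 1 + B I I = B ζ ζ := by
  have hnorm : ζ.re ^ 2 + ζ.im ^ 2 = 1 := by
    have := Complex.sq_norm ζ
    rw [hζ, normSq_apply] at this
    linarith
  rw [apply_self_eq_of_apply_I_mul_eq_zero hB hζ htan 1,
    apply_self_eq_of_apply_I_mul_eq_zero hB hζ htan I, ← add_smul]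
  simp [hnorm]

end ContinuousLinearMap

theorem AnalyticAt.fderiv_fderiv_apply_self_eq_mul_lap {R : ℂ → ℝ} {ζ : ℂ}
    (hR : AnalyticAt ℝ R ζ) (hflat : ∀ z ∈ sphere (0 : ℂ) 1, fderiv ℝ R z = 0)
    (hζ : ζ ∈ sphere (0 : ℂ) 1) (v : ℂ) :
    fderiv ℝ (fderiv ℝ R) ζ v v = (conj ζ * v).re ^ 2 * lap R ζ := by
  set B := fderiv ℝ (fderiv ℝ R) ζ
  have hζn : ‖ζ‖ = 1 := by simpa using hζ
  have hsym : ∀ x y, B x y = B y x := hR.contDiffAt.isSymmSndFDerivAt_of_omega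
  have htan : B (Complex.I * ζ) = 0 :=
    hR.fderiv.differentiableAt.hasFDerivAt.apply_I_mul_eq_zero_of_eqOn_sphere hflat hζ
  have hlap : lap R ζ = B ζ ζ := by
    rw [← B.apply_one_one_add_apply_I_I hsym hζn htan, lap, iteratedFDeriv_two_apply,
      iteratedFDeriv_two_apply]
    rfl
  rw [hlap, ← smul_eq_mul, ← B.apply_self_eq_of_apply_I_mul_eq_zero hsym hζn htan]

theorem HasDerivAt.inner_nonneg_of_eventually_norm_le {F : Type*} [NormedAddCommGroup F]
    [InnerProductSpace ℝ F] {γ : ℝ → F} {v : F} {t₀ : ℝ} (hγ : HasDerivAt γ v t₀)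
    (h : ∀ᶠ t in 𝓝[≥] t₀, ‖γ t₀‖ ≤ ‖γ t‖) : 0 ≤ ⟪γ t₀, v⟫_ℝ := by
  have hmin : IsLocalMinOn (‖γ ·‖ ^ 2) (Ici t₀) t₀ :=
    h.mono fun t ht => pow_le_pow_left₀ (norm_nonneg _) ht 2
  have hcone : (1 : ℝ) ∈ posTangentConeAt (Ici t₀) t₀ :=
    mem_posTangentConeAt_of_segment_subset (by
      rw [segment_eq_Icc (by linarith)]
      exact Icc_subset_Ici_self)
  have := hmin.hasFDerivWithinAt_nonneg hγ.norm_sq.hasFDerivAt.hasFDerivWithinAt hcone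
  simp only [ContinuousLinearMap.toSpanSingleton_apply, one_smul] at this
  linarith

theorem DifferentiableOn.apply_notMem_image_of_mem_frontier {f : ℂ → ℂ} {U : Set ℂ} {ζ : ℂ}
    (hU : IsOpen U) (hf : DifferentiableOn ℂ f U) (hinj : InjOn f U)
    (hζ : ζ ∈ frontier U) (hcont : ContinuousWithinAt f U ζ) : f ζ ∉ f '' U := by
  rintro ⟨z₀, hz₀, hfz₀⟩
  have hζU : ζ ∉ U := fun h => (hU.frontier_eq ▸ hζ).2 h
  set d := ‖ζ - z₀‖ / 2 with hd_def
  have hd : 0 < d := by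
    have : ζ - z₀ ≠ 0 := sub_ne_zero.2 fun h => hζU (h ▸ hz₀)
    positivity
  -- `f` is injective, hence not locally constant at `z₀`, hence open there.
  have hopen : 𝓝 (f z₀) ≤ map f (𝓝 z₀) := by
    refine ((hf.analyticOnNhd hU) z₀ hz₀).eventually_constant_or_nhds_le_map_nhds.resolve_left
      fun hconst => ?_
    have hU₀ : ∀ᶠ z in 𝓝[≠] z₀, (z ∈ U ∧ f z = f z₀) ∧ z ≠ z₀ :=
      (((hU.eventually_mem hz₀).and hconst).filter_mono nhdsWithin_le_nhds).and
        eventually_mem_nhdsWithin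
    obtain ⟨z, ⟨hzU, hfz⟩, hz⟩ := hU₀.exists
    exact hz (hinj hzU hz₀ hfz)
  have himage : f '' (U ∩ ball z₀ d) ∈ 𝓝 (f ζ) :=
    hfz₀ ▸ hopen (image_mem_map (inter_mem (hU.mem_nhds hz₀) (ball_mem_nhds z₀ hd)))
  have : (𝓝[U] ζ).NeBot := mem_closure_iff_nhdsWithin_neBot.1 hζ.1
  have hfar : ∀ᶠ z in 𝓝 ζ, d < ‖z - z₀‖ :=
    continuousAt_const.eventually_lt (by fun_prop : Continuous fun z => ‖z - z₀‖).continuousAt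
      (by rw [hd_def]; linarith)
  obtain ⟨z, ⟨w, ⟨hwU, hw⟩, hfw⟩, hzU, hzd⟩ :=
    ((hcont.eventually_mem himage).and
      (eventually_mem_nhdsWithin.and (hfar.filter_mono nhdsWithin_le_nhds))).exists
  rw [hinj hwU hzU hfw, mem_ball_iff_norm] at hw
  exact hw.asymm hzd

theorem DifferentiableOn.one_le_norm_of_ball_subset_image {f : ℂ → ℂ} {ζ : ℂ}
    (hf : DifferentiableOn ℂ f (ball 0 1)) (hinj : InjOn f (ball 0 1))
    (hcont : ContinuousOn f (closedBall 0 1)) (hball : ball 0 1 ⊆ f '' ball 0 1)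
    (hζ : ζ ∈ sphere (0 : ℂ) 1) : 1 ≤ ‖f ζ‖ := by
  have hnot := hf.apply_notMem_image_of_mem_frontier isOpen_ball hinj
    (by rwa [frontier_ball _ one_ne_zero])
    ((hcont ζ (sphere_subset_closedBall hζ)).mono ball_subset_closedBall)
  simpa using mt (@hball _) hnot

theorem Real.eq_rpow_neg_half_of_sq_mul_eq_one {a L : ℝ} (ha : 0 ≤ a) (hL : 0 < L)
    (h : a ^ 2 * L = 1) : a = L ^ (-(1 : ℝ) / 2) := by
  rw [show -(1 : ℝ) / 2 = -(1 / 2) by norm_num, Real.rpow_neg hL.le, ← Real.sqrt_eq_rpow,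
    ← Real.sqrt_inv, eq_inv_of_mul_eq_one_right h, inv_inv, Real.sqrt_sq ha]

theorem stmt_15_general (R : ℂ → ℝ) (U : Set ℂ)
    (hUsph : Metric.sphere (0:ℂ) 1 ⊆ U)
    (hRan : AnalyticOnNhd ℝ R U)
    (hRflat : ∀ ζ ∈ Metric.sphere (0:ℂ) 1, R ζ = 0 ∧ fderiv ℝ R ζ = 0)
    (hRlap : ∀ ζ ∈ Metric.sphere (0:ℂ) 1, 0 < lap R ζ)
    (ψ : ℝ → ℂ → ℂ) (ε : ℝ) (hε : 0 < ε)
    (hψid : ∀ z ∈ Metric.ball (0:ℂ) 1, ψ 0 z = z)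
    (hψhol : ∀ t : ℝ, |t| < ε → DifferentiableOn ℂ (ψ t) (Metric.ball (0:ℂ) 1) ∧
      Set.InjOn (ψ t) (Metric.ball (0:ℂ) 1) ∧
      ContinuousOn (ψ t) (Metric.closedBall (0:ℂ) 1))
    (hψlevel : ∀ t : ℝ, |t| < ε → ∀ ζ ∈ Metric.sphere (0:ℂ) 1, R (ψ t ζ) = t ^ 2 / 2)
    (hmono : ∀ s t : ℝ, |s| < ε → |t| < ε → s ≤ t →
      ψ s '' Metric.ball (0:ℂ) 1 ⊆ ψ t '' Metric.ball (0:ℂ) 1)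
    (hsmooth : ∀ ζ ∈ Metric.sphere (0:ℂ) 1, DifferentiableAt ℝ (fun t => ψ t ζ) 0) :
    ∀ ζ ∈ Metric.sphere (0:ℂ) 1,
      ((starRingEnd ℂ) ζ * deriv (fun t => ψ t ζ) 0).re = (lap R ζ) ^ (-(1:ℝ)/2) := by
  intro ζ hζ
  have hR := hRan ζ (hUsph hζ)
  have hε₀ : |(0 : ℝ)| < ε := by simpa using hε
  have hsmall : ∀ᶠ t : ℝ in 𝓝 0, |t| < ε := by
    filter_upwards [ball_mem_nhds (0 : ℝ) hε] with t ht
    simpa using ht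
  have hψ₀ : ψ 0 ζ = ζ :=
    EqOn.of_subset_closure hψid (hψhol 0 hε₀).2.2 continuousOn_id ball_subset_closedBall
      (closure_ball (0 : ℂ) one_ne_zero).ge (sphere_subset_closedBall hζ)
  have hv := (hsmooth ζ hζ).hasDerivAt
  have hBv := hR.fderiv_fderiv_apply_eq_one_of_comp_eq_sq_div_two (hRflat ζ hζ).1
    (hRflat ζ hζ).2 hv hψ₀ (hsmall.mono fun t ht => hψlevel t ht ζ hζ)
  have hout : ∀ᶠ t in 𝓝[≥] (0 : ℝ), ‖ψ 0 ζ‖ ≤ ‖ψ t ζ‖ := by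
    filter_upwards [hsmall.filter_mono nhdsWithin_le_nhds, self_mem_nhdsWithin] with t ht ht₀
    have hball : ball (0 : ℂ) 1 ⊆ ψ t '' ball 0 1 :=
      (EqOn.image_eq_self hψid).symm.subset.trans (hmono 0 t hε₀ ht ht₀)
    rw [hψ₀, (by simpa using hζ : ‖ζ‖ = 1)]
    exact (hψhol t ht).1.one_le_norm_of_ball_subset_image (hψhol t ht).2.1 (hψhol t ht).2.2
      hball hζ
  have hsign : 0 ≤ (conj ζ * deriv (fun t => ψ t ζ) 0).re := by
    simpa [Complex.inner, hψ₀, mul_comm] using hv.inner_nonneg_of_eventually_norm_le hout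
  refine Real.eq_rpow_neg_half_of_sq_mul_eq_one hsign (hRlap ζ hζ) ?_
  rw [← hBv, hR.fderiv_fderiv_apply_self_eq_mul_lap (fun z hz => (hRflat z hz).2) hζ]

/-- Let `ψ_t : 𝔻 → D_t` be the normalized conformal maps onto the
increasing domains `D_t` bounded by the level curves `{R = t²/2}` of a weight `R`
that is real-analytic near `𝕋` and quadratically flat on `𝕋` with `ΔR > 0` there,
with `D_0 = 𝔻`.  Then the normal velocity at `t = 0` satisfies
`Re(ζ̄ ∂_t ψ_t(ζ))|_{t=0} = (4ΔR(ζ))^{−1/2}` for `ζ ∈ 𝕋`. -/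
theorem stmt_15 (R : ℂ → ℝ) (U : Set ℂ) (hU : IsOpen U)
    (hUsph : Metric.sphere (0:ℂ) 1 ⊆ U)
    (hRan : AnalyticOnNhd ℝ R U)
    (hRflat : ∀ ζ ∈ Metric.sphere (0:ℂ) 1, R ζ = 0 ∧ fderiv ℝ R ζ = 0)
    (hRlap : ∀ ζ ∈ Metric.sphere (0:ℂ) 1, 0 < lap R ζ)
    (ψ : ℝ → ℂ → ℂ) (ε : ℝ) (hε : 0 < ε)
    (hψid : ∀ z ∈ Metric.ball (0:ℂ) 1, ψ 0 z = z)
    (hψhol : ∀ t : ℝ, |t| < ε → DifferentiableOn ℂ (ψ t) (Metric.ball (0:ℂ) 1) ∧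
      Set.InjOn (ψ t) (Metric.ball (0:ℂ) 1) ∧
      ContinuousOn (ψ t) (Metric.closedBall (0:ℂ) 1))
    (hψnorm : ∀ t : ℝ, |t| < ε →
      ψ t 0 = 0 ∧ (deriv (ψ t) 0).im = 0 ∧ 0 < (deriv (ψ t) 0).re)
    (hψlevel : ∀ t : ℝ, |t| < ε → ∀ ζ ∈ Metric.sphere (0:ℂ) 1, R (ψ t ζ) = t ^ 2 / 2)
    (hmono : ∀ s t : ℝ, |s| < ε → |t| < ε → s ≤ t →
      ψ s '' Metric.ball (0:ℂ) 1 ⊆ ψ t '' Metric.ball (0:ℂ) 1)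
    (hsmooth : ∀ ζ ∈ Metric.sphere (0:ℂ) 1, DifferentiableAt ℝ (fun t => ψ t ζ) 0) :
    ∀ ζ ∈ Metric.sphere (0:ℂ) 1,
      ((starRingEnd ℂ) ζ * deriv (fun t => ψ t ζ) 0).re = (lap R ζ) ^ (-(1:ℝ)/2) :=
  stmt_15_general R U hUsph hRan hRflat hRlap ψ ε hε hψid hψhol hψlevel hmono hsmooth
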